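/- arXiv:2403.00332 — 3 statements merged into one kernel-verified Lean document; each statement's English description precedes it below -/
import Mathlib

section
/- Let p = (x, y, z, s) ∈ ℝ^n. If p ∉ Σ(f) (i.e. x_{2i−1} + 2z·x_{2i} ≠ 0 for some 1 ≤ i ≤ k, or y + 3z² ≠ 0), then the derivative Df_p is injective. If p ∈ Σ(f), then the kernel of Df_p is exactly the one-dimensional span of the coordinate vector e_z. In particular, dim ker Df_p ≤ 1 for every p ∈ ℝ^n (f is a corank-≤1 map). -/
noncomputable section

open scoped RealInnerProductSpace

/-- Index type for the domain `ℝⁿ`, `n = 2k+2+m`: coordinates `x` (2k of them),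
`y`, `z`, and `s` (m of them). -/
abbrev DomIx (k m : ℕ) := (Fin (2*k)) ⊕ Unit ⊕ Unit ⊕ (Fin m)

/-- The domain `ℝⁿ` with its Euclidean inner product. -/
abbrev Dom (k m : ℕ) := EuclideanSpace ℝ (DomIx k m)

/-- Index type for the codomain `ℝ^{n+k}`: coordinates `X` (2k+1), `Y` (k), `Z`, `S` (m). -/
abbrev CodIx (k m : ℕ) := (Fin (2*k+1)) ⊕ (Fin k) ⊕ Unit ⊕ (Fin m)

/-- The codomain `ℝ^{n+k}` with its Euclidean inner product. -/
abbrev Cod (k m : ℕ) := EuclideanSpace ℝ (CodIx k m)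

/-- The `x`-coordinates of a point (0-based: `px p j` is `x_{j+1}`). -/
def px {k m : ℕ} (p : Dom k m) (j : Fin (2*k)) : ℝ := p (Sum.inl j)

/-- The `y`-coordinate of a point. -/
def py {k m : ℕ} (p : Dom k m) : ℝ := p (Sum.inr (Sum.inl ()))

/-- The `z`-coordinate of a point. -/
def pz {k m : ℕ} (p : Dom k m) : ℝ := p (Sum.inr (Sum.inr (Sum.inl ())))

/-- The `s`-coordinates of a point. -/
def ps {k m : ℕ} (p : Dom k m) (j : Fin m) : ℝ := p (Sum.inr (Sum.inr (Sum.inr j)))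

/-- The (0-based) index of the coordinate `x_{2i-1}` (1-based), for `i : Fin k` (0-based). -/
def xo {k : ℕ} (i : Fin k) : Fin (2*k) := ⟨2*i.1, by have := i.isLt; omega⟩

/-- The (0-based) index of the coordinate `x_{2i}` (1-based), for `i : Fin k` (0-based). -/
def xe {k : ℕ} (i : Fin k) : Fin (2*k) := ⟨2*i.1+1, by have := i.isLt; omega⟩

/-- The cusp normal form `f : ℝⁿ → ℝ^{n+k}`:
`X_i = x_i`, `X_{2k+1} = y`, `Y_i = z x_{2i-1} + z² x_{2i}`, `Z = z y + z³`, `S_j = s_j`. -/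
def cuspF (k m : ℕ) (p : Dom k m) : Cod k m :=
  (EuclideanSpace.equiv (CodIx k m) ℝ).symm fun q =>
    match q with
    | Sum.inl j => if h : j.1 < 2*k then px p ⟨j.1, h⟩ else py p
    | Sum.inr (Sum.inl i) => pz p * px p (xo i) + (pz p)^2 * px p (xe i)
    | Sum.inr (Sum.inr (Sum.inl _)) => pz p * py p + (pz p)^3
    | Sum.inr (Sum.inr (Sum.inr j)) => ps p j

/-- The singular set `Σ(f)` of the cusp normal form:
`x_{2i-1} + 2 z x_{2i} = 0` for all `i` and `y + 3z² = 0`. -/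
def SingSet (k m : ℕ) : Set (Dom k m) :=
  {p | (∀ i : Fin k, px p (xo i) + 2 * pz p * px p (xe i) = 0) ∧ py p + 3 * (pz p)^2 = 0}

/-- The standard basis vector `e_z` of the domain. -/
def ez (k m : ℕ) : Dom k m := EuclideanSpace.single (Sum.inr (Sum.inr (Sum.inl ()))) 1

/-!
The Jacobian of the cusp normal form restricts to the identity on the `x`, `y` and `s`
coordinates (through the rows `X` and `S`), so its kernel always lies in the line `ℝ e_z`.
The image of `e_z` has entries `x_{2i-1} + 2 z x_{2i}` in the rows `Y_i`, `y + 3 z²` in the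
row `Z` and zero elsewhere, so it vanishes exactly on `Σ(f)`. Hence the kernel is `0` off
`Σ(f)` and `ℝ e_z` on it.
-/

theorem LinearMap.ker_eq_bot_of_le_span_singleton {K V W : Type*} [DivisionRing K]
    [AddCommGroup V] [AddCommGroup W] [Module K V] [Module K W]
    {f : V →ₗ[K] W} {e : V} (hker : LinearMap.ker f ≤ K ∙ e) (he : f e ≠ 0) :
    LinearMap.ker f = ⊥ := by
  refine (Submodule.eq_bot_iff _).2 fun v hv => ?_
  obtain ⟨c, rfl⟩ := Submodule.mem_span_singleton.1 (hker hv)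
  rw [LinearMap.mem_ker, map_smul, smul_eq_zero] at hv
  rw [hv.resolve_right he, zero_smul]

section CuspNormalForm

variable {k m : ℕ}

abbrev yIx : DomIx k m := Sum.inr (Sum.inl ())

abbrev zIx : DomIx k m := Sum.inr (Sum.inr (Sum.inl ()))

def coord (q : DomIx k m) : Dom k m →L[ℝ] ℝ := EuclideanSpace.proj q

def cuspDerivRow (p : Dom k m) : CodIx k m → (Dom k m →L[ℝ] ℝ)
  | Sum.inl j => if h : j.1 < 2*k then coord (Sum.inl ⟨j.1, h⟩) else coord yIx
  | Sum.inr (Sum.inl i) =>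
      pz p • coord (Sum.inl (xo i)) + pz p ^ 2 • coord (Sum.inl (xe i))
        + (px p (xo i) + 2 * pz p * px p (xe i)) • coord zIx
  | Sum.inr (Sum.inr (Sum.inl _)) => pz p • coord yIx + (py p + 3 * pz p ^ 2) • coord zIx
  | Sum.inr (Sum.inr (Sum.inr j)) => coord (Sum.inr (Sum.inr (Sum.inr j)))

def cuspDeriv (p : Dom k m) : Dom k m →L[ℝ] Cod k m :=
  ((EuclideanSpace.equiv (CodIx k m) ℝ).symm : (CodIx k m → ℝ) →L[ℝ] Cod k m) ∘L
    ContinuousLinearMap.pi (cuspDerivRow p)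

@[simp]
theorem cuspDeriv_apply (p v : Dom k m) (q : CodIx k m) :
    cuspDeriv p v q = cuspDerivRow p q v := rfl

theorem hasFDerivAt_coord (q : DomIx k m) (p : Dom k m) :
    HasFDerivAt (fun x : Dom k m => x q) (coord q) p :=
  (coord q).hasFDerivAt

theorem hasFDerivAt_cuspF (p : Dom k m) : HasFDerivAt (cuspF k m) (cuspDeriv p) p := by
  rw [← hasFDerivWithinAt_univ, hasFDerivWithinAt_euclidean]
  intro q
  rw [hasFDerivWithinAt_univ, show PiLp.proj 2 _ q ∘L cuspDeriv p = cuspDerivRow p q from rfl]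
  have hz := hasFDerivAt_coord zIx p
  match q with
  | Sum.inl j =>
    by_cases h : j.1 < 2 * k
    · simpa [cuspDerivRow, h, cuspF, px] using hasFDerivAt_coord (Sum.inl ⟨j.1, h⟩) p
    · simpa [cuspDerivRow, h, cuspF, py] using hasFDerivAt_coord yIx p
  | Sum.inr (Sum.inl i) =>
    refine ((hz.mul (hasFDerivAt_coord (Sum.inl (xo i)) p)).add
      ((hz.pow 2).mul (hasFDerivAt_coord (Sum.inl (xe i)) p))).congr_fderiv ?_
    ext v
    simp only [cuspDerivRow, coord, px, pz, add_apply, smul_apply, PiLp.proj_apply, smul_eq_mul,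
      nsmul_eq_mul]
    ring
  | Sum.inr (Sum.inr (Sum.inl _)) =>
    refine ((hz.mul (hasFDerivAt_coord yIx p)).add (hz.pow 3)).congr_fderiv ?_
    ext v
    simp only [cuspDerivRow, coord, py, pz, add_apply, smul_apply, PiLp.proj_apply, smul_eq_mul,
      nsmul_eq_mul]
    ring
  | Sum.inr (Sum.inr (Sum.inr j)) => exact hasFDerivAt_coord _ p

theorem ker_cuspDeriv_le_span_ez (p : Dom k m) :
    LinearMap.ker (cuspDeriv p : Dom k m →ₗ[ℝ] Cod k m) ≤ ℝ ∙ ez k m := by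
  intro v hv
  have row : ∀ q, cuspDerivRow p q v = 0 := fun q => by
    simpa using congrArg (· q) (LinearMap.mem_ker.1 hv)
  refine Submodule.mem_span_singleton.2 ⟨v zIx, ?_⟩
  ext q
  match q with
  | Sum.inl j =>
    simpa [cuspDerivRow, coord, ez, j.isLt] using (row (Sum.inl ⟨j.1, by omega⟩)).symm
  | Sum.inr (Sum.inl _) =>
    simpa [cuspDerivRow, coord, ez] using (row (Sum.inl ⟨2 * k, by omega⟩)).symm
  | Sum.inr (Sum.inr (Sum.inl _)) => simp [ez]
  | Sum.inr (Sum.inr (Sum.inr j)) =>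
    simpa [cuspDerivRow, coord, ez] using (row (Sum.inr (Sum.inr (Sum.inr j)))).symm

theorem cuspDeriv_ez_eq_zero_iff (p : Dom k m) :
    cuspDeriv p (ez k m) = 0 ↔ p ∈ SingSet k m := by
  constructor
  · intro h
    refine ⟨fun i => ?_, ?_⟩
    · simpa [cuspDerivRow, coord, ez] using congrArg (· (Sum.inr (Sum.inl i))) h
    · simpa [cuspDerivRow, coord, ez] using congrArg (· (Sum.inr (Sum.inr (Sum.inl ())))) h
  · rintro ⟨hY, hZ⟩
    ext q
    match q with
    | Sum.inl j => by_cases h : j.1 < 2 * k <;> simp [cuspDerivRow, coord, ez, h]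
    | Sum.inr (Sum.inl i) => simp [cuspDerivRow, coord, ez, hY i]
    | Sum.inr (Sum.inr (Sum.inl _)) => simp [cuspDerivRow, coord, ez, hZ]
    | Sum.inr (Sum.inr (Sum.inr j)) => simp [cuspDerivRow, coord, ez]

end CuspNormalForm

theorem statement0_general (k m : ℕ) (p : Dom k m) :
    (p ∉ SingSet k m → Function.Injective (fderiv ℝ (cuspF k m) p)) ∧
    (p ∈ SingSet k m →
      LinearMap.ker (fderiv ℝ (cuspF k m) p : Dom k m →ₗ[ℝ] Cod k m) = Submodule.span ℝ {ez k m}) ∧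
    Module.finrank ℝ (LinearMap.ker (fderiv ℝ (cuspF k m) p : Dom k m →ₗ[ℝ] Cod k m)) ≤ 1 := by
  rw [(hasFDerivAt_cuspF p).fderiv]
  have hker := ker_cuspDeriv_le_span_ez p
  refine ⟨fun hp => ?_, fun hp => ?_, ?_⟩
  · exact LinearMap.ker_eq_bot.1 <| LinearMap.ker_eq_bot_of_le_span_singleton hker
      (mt (cuspDeriv_ez_eq_zero_iff p).1 hp)
  · exact le_antisymm hker
      (Submodule.span_singleton_le_iff_mem _ _ |>.2 ((cuspDeriv_ez_eq_zero_iff p).2 hp))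
  · exact (Submodule.finrank_mono hker).trans
      (by simpa using finrank_span_le_card (R := ℝ) ({ez k m} : Set (Dom k m)))

/-- If `p ∉ Σ(f)` then `Df_p` is injective; if `p ∈ Σ(f)` then
`ker Df_p = span {e_z}`; in particular `dim ker Df_p ≤ 1` for every `p`. -/
theorem statement0 (k m : ℕ) (hk : 1 ≤ k) (p : Dom k m) :
    (p ∉ SingSet k m → Function.Injective (fderiv ℝ (cuspF k m) p)) ∧
    (p ∈ SingSet k m →
      LinearMap.ker (fderiv ℝ (cuspF k m) p : Dom k m →ₗ[ℝ] Cod k m) = Submodule.span ℝ {ez k m}) ∧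
    Module.finrank ℝ (LinearMap.ker (fderiv ℝ (cuspF k m) p : Dom k m →ₗ[ℝ] Cod k m)) ≤ 1 :=
  statement0_general k m p
end
end

section
/- For every p = (x, y, z, s) ∈ Σ(f), the n−1 vectors u_1(z), …, u_{k+1}(z), v_1(z), …, v_k(z), w_1, …, w_m are linearly independent and their span equals the range of Df_p; in particular Df_p has rank n − 1 at every point of Σ(f). -/
noncomputable section

open scoped RealInnerProductSpace

/-- The standard basis vector `e_{X_j}` (0-based `j`) of the codomain. -/
def eX (k m : ℕ) (j : Fin (2*k+1)) : Cod k m := EuclideanSpace.single (Sum.inl j) 1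

/-- The standard basis vector `e_{Y_i}` (0-based `i`) of the codomain. -/
def eY (k m : ℕ) (i : Fin k) : Cod k m := EuclideanSpace.single (Sum.inr (Sum.inl i)) 1

/-- The standard basis vector `e_Z` of the codomain. -/
def eZ (k m : ℕ) : Cod k m := EuclideanSpace.single (Sum.inr (Sum.inr (Sum.inl ()))) 1

/-- The standard basis vector `e_{S_j}` of the codomain; this is `w_j`. -/
def eS (k m : ℕ) (j : Fin m) : Cod k m := EuclideanSpace.single (Sum.inr (Sum.inr (Sum.inr j))) 1

/-- `u_i(z) = e_{X_{2i-1}} + z • e_{Y_i}` for `1 ≤ i ≤ k` (here `i : Fin k`, 0-based). -/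
def uVec (k m : ℕ) (i : Fin k) (z : ℝ) : Cod k m :=
  eX k m ⟨2*i.1, by have := i.isLt; omega⟩ + z • eY k m i

/-- `u_{k+1}(z) = e_{X_{2k+1}} + z • e_Z`. -/
def uLast (k m : ℕ) (z : ℝ) : Cod k m := eX k m ⟨2*k, by omega⟩ + z • eZ k m

/-- `v_i(z) = e_{X_{2i}} + z² • e_{Y_i}` for `1 ≤ i ≤ k` (here `i : Fin k`, 0-based). -/
def vVec (k m : ℕ) (i : Fin k) (z : ℝ) : Cod k m :=
  eX k m ⟨2*i.1+1, by have := i.isLt; omega⟩ + z^2 • eY k m i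

/-- The family `u_1(z), …, u_{k+1}(z), v_1(z), …, v_k(z), w_1, …, w_m`. -/
def famUVW (k m : ℕ) (z : ℝ) : (Fin (k+1) ⊕ Fin k ⊕ Fin m) → Cod k m :=
  fun q =>
    match q with
    | Sum.inl i => if h : i.1 < k then uVec k m ⟨i.1, h⟩ z else uLast k m z
    | Sum.inr (Sum.inl i) => vVec k m i z
    | Sum.inr (Sum.inr j) => eS k m j

/-!
With `z = pz p`, the cusp map splits as `f(p) = L_z(p) + z³ e_Z`, where `L_z = Cusp.lin k m z`
is the linear map `(x, y, s) ↦ (x, y, z x_{2i-1} + z² x_{2i}, z y, s)`. The `z`-partial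
derivative of `f` is `(0, x_{2i-1} + 2z x_{2i}, y + 3z², 0)`, which vanishes on `Σ(f)`, so there
`Df_p = L_z`. `L_z` maps `e_{x_{2i-1}}, e_y, e_{x_{2i}}, e_{s_j}` to `u_i(z), u_{k+1}(z), v_i(z), w_j`
and kills `e_z`. These images are independent since they keep the `X`- and `S`-coordinates of
their preimages, and as `ker L_z ≠ 0` a dimension count shows that they span the range of `L_z`.
-/

theorem LinearIndependent.span_eq_range_of_ker_ne_bot {K V W ι : Type*} [Field K]
    [AddCommGroup V] [Module K V] [FiniteDimensional K V] [AddCommGroup W] [Module K W]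
    [Fintype ι] {v : ι → W} (hv : LinearIndependent K v) (f : V →ₗ[K] W)
    (hvf : ∀ i, v i ∈ LinearMap.range f) (hf : LinearMap.ker f ≠ ⊥)
    (hcard : Fintype.card ι + 1 = Module.finrank K V) :
    Submodule.span K (Set.range v) = LinearMap.range f := by
  refine Submodule.eq_of_le_of_finrank_le (Submodule.span_le.2 (Set.range_subset_iff.2 hvf)) ?_
  have hker : 0 < Module.finrank K (LinearMap.ker f) :=
    Nat.pos_of_ne_zero (Submodule.finrank_eq_zero.not.2 hf)
  have := f.finrank_range_add_finrank_ker
  rw [finrank_span_eq_card hv]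
  omega

namespace EuclideanSpace

def ofCoords {ι κ : Type*} (g : κ → EuclideanSpace ℝ ι →L[ℝ] ℝ) :
    EuclideanSpace ℝ ι →L[ℝ] EuclideanSpace ℝ κ :=
  (PiLp.continuousLinearEquiv 2 ℝ fun _ : κ => ℝ).symm.toContinuousLinearMap ∘L
    ContinuousLinearMap.pi g

@[simp]
lemma ofCoords_apply {ι κ : Type*} (g : κ → EuclideanSpace ℝ ι →L[ℝ] ℝ)
    (v : EuclideanSpace ℝ ι) (q : κ) : ofCoords g v q = g q v :=
  rfl

end EuclideanSpace

open EuclideanSpace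

namespace Cusp

variable {k m : ℕ}

abbrev yIx : DomIx k m := Sum.inr (Sum.inl ())
abbrev zIx : DomIx k m := Sum.inr (Sum.inr (Sum.inl ()))
abbrev sIx (j : Fin m) : DomIx k m := Sum.inr (Sum.inr (Sum.inr j))

variable (k m) in
def lin (z : ℝ) : Dom k m →L[ℝ] Cod k m := ofCoords fun q =>
  match q with
  | Sum.inl j => if h : j.1 < 2*k then proj (Sum.inl ⟨j.1, h⟩) else proj yIx
  | Sum.inr (Sum.inl i) => z • proj (Sum.inl (xo i)) + z^2 • proj (Sum.inl (xe i))
  | Sum.inr (Sum.inr (Sum.inl _)) => z • proj yIx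
  | Sum.inr (Sum.inr (Sum.inr j)) => proj (sIx j)

lemma lin_apply_X (z : ℝ) (v : Dom k m) (j : Fin (2*k+1)) :
    lin k m z v (Sum.inl j) = if h : j.1 < 2*k then v (Sum.inl ⟨j.1, h⟩) else v yIx := by
  simp only [lin, ofCoords_apply]
  split_ifs <;> rfl

@[simp]
lemma lin_apply_Y (z : ℝ) (v : Dom k m) (i : Fin k) :
    lin k m z v (Sum.inr (Sum.inl i)) = z * v (Sum.inl (xo i)) + z^2 * v (Sum.inl (xe i)) :=
  rfl

@[simp]
lemma lin_apply_Z (z : ℝ) (v : Dom k m) (u : Unit) :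
    lin k m z v (Sum.inr (Sum.inr (Sum.inl u))) = z * v yIx :=
  rfl

@[simp]
lemma lin_apply_S (z : ℝ) (v : Dom k m) (j : Fin m) :
    lin k m z v (Sum.inr (Sum.inr (Sum.inr j))) = v (sIx j) :=
  rfl

theorem hasStrictFDerivAt_cuspF {p : Dom k m} (hp : p ∈ SingSet k m) :
    HasStrictFDerivAt (cuspF k m) (lin k m (pz p)) p := by
  obtain ⟨hx, hy⟩ := hp
  simp only [px, py, pz] at hx hy
  have hc : ∀ a, HasStrictFDerivAt (fun x : Dom k m => x a) (proj a : Dom k m →L[ℝ] ℝ) p :=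
    PiLp.hasStrictFDerivAt_apply 2 p
  rw [hasStrictFDerivAt_euclidean]
  rintro (j | i | _ | j)
  · show HasStrictFDerivAt (fun x => if h : j.1 < 2*k then px x ⟨j.1, h⟩ else py x) _ p
    by_cases h : j.1 < 2*k
    · simp only [h, dif_pos]
      refine (hc _).congr_fderiv ?_
      ext v
      simp [lin, h]
    · simp only [h, dif_neg, not_false_eq_true]
      refine (hc _).congr_fderiv ?_
      ext v
      simp [lin, h]
  · refine ((hc zIx).mul (hc _) |>.add (((hc zIx).pow 2).mul (hc _))).congr_fderiv ?_
    ext v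
    simp only [Nat.add_one_sub_one, pow_one, nsmul_eq_mul, Nat.cast_ofNat, add_apply, smul_apply,
      PiLp.proj_apply, smul_eq_mul, pz, ContinuousLinearMap.comp_apply, lin_apply_Y]
    linear_combination v zIx * hx i
  · refine ((hc zIx).mul (hc yIx) |>.add ((hc zIx).pow 3)).congr_fderiv ?_
    ext v
    simp only [Nat.add_one_sub_one, nsmul_eq_mul, Nat.cast_ofNat, add_apply, smul_apply,
      PiLp.proj_apply, smul_eq_mul, pz, ContinuousLinearMap.comp_apply, lin_apply_Z]
    linear_combination v zIx * hy
  · exact hc (sIx j)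

variable (k m) in
def sourceIx : Fin (k+1) ⊕ Fin k ⊕ Fin m → DomIx k m
  | Sum.inl i => if h : i.1 < k then Sum.inl (xo ⟨i.1, h⟩) else yIx
  | Sum.inr (Sum.inl i) => Sum.inl (xe i)
  | Sum.inr (Sum.inr j) => sIx j

lemma sourceIx_injective : Function.Injective (sourceIx k m) := by
  rintro (a | a | a) (b | b | b) h <;> simp [sourceIx, xo, xe] at h <;> grind

lemma sourceIx_ne_zIx (q : Fin (k+1) ⊕ Fin k ⊕ Fin m) : sourceIx k m q ≠ zIx := by
  rcases q with i | i | j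
  · simp only [sourceIx]
    split_ifs <;> simp
  all_goals simp [sourceIx]

lemma lin_single_sourceIx (z : ℝ) (q : Fin (k+1) ⊕ Fin k ⊕ Fin m) :
    lin k m z (single (sourceIx k m q) 1) = famUVW k m z q := by
  ext a
  rcases q with i | i | j
  · by_cases h : i.1 < k <;> rcases a with j | i' | _ | j <;>
      simp [lin_apply_X, sourceIx, famUVW, h, uVec, uLast, eX, eY, eZ, xo, xe, Fin.ext_iff] <;>
      grind
  all_goals rcases a with j | i' | _ | j <;>
    simp [lin_apply_X, sourceIx, famUVW, vVec, eS, eX, eY, xo, xe, Fin.ext_iff] <;> grind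

lemma lin_single_zIx (z : ℝ) : lin k m z (single zIx 1) = 0 := by
  ext a
  rcases a with j | i | _ | j <;> simp [lin_apply_X]

lemma ker_lin_ne_bot (z : ℝ) : LinearMap.ker (lin k m z : Dom k m →ₗ[ℝ] Cod k m) ≠ ⊥ :=
  (Submodule.ne_bot_iff _).2 ⟨single zIx 1, lin_single_zIx z, by simp⟩

variable (k m) in
def forgetYZ : Cod k m →L[ℝ] Dom k m := ofCoords fun a =>
  match a with
  | Sum.inl j => proj (Sum.inl j.castSucc)
  | Sum.inr (Sum.inl _) => proj (Sum.inl (Fin.last (2*k)))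
  | Sum.inr (Sum.inr (Sum.inl _)) => 0
  | Sum.inr (Sum.inr (Sum.inr j)) => proj (Sum.inr (Sum.inr (Sum.inr j)))

lemma forgetYZ_lin (z : ℝ) (v : Dom k m) : forgetYZ k m (lin k m z v) = v - v zIx • ez k m := by
  ext a
  rcases a with j | _ | _ | j <;> simp [forgetYZ, lin_apply_X, ez]

theorem linearIndependent_famUVW (z : ℝ) : LinearIndependent ℝ (famUVW k m z) := by
  have h : forgetYZ k m ∘ famUVW k m z = fun q => single (sourceIx k m q) 1 := by
    funext q
    rw [Function.comp_apply, ← lin_single_sourceIx, forgetYZ_lin]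
    simp [sourceIx_ne_zIx]
  refine LinearIndependent.of_comp (forgetYZ k m : Cod k m →ₗ[ℝ] Dom k m) ?_
  rw [ContinuousLinearMap.coe_coe, h]
  simpa [Function.comp_def] using
    ((EuclideanSpace.basisFun _ ℝ).orthonormal.comp _ sourceIx_injective).linearIndependent

end Cusp

theorem statement1_general (k m : ℕ) (p : Dom k m) (hp : p ∈ SingSet k m) :
    LinearIndependent ℝ (famUVW k m (pz p)) ∧
    Submodule.span ℝ (Set.range (famUVW k m (pz p)))
      = LinearMap.range (fderiv ℝ (cuspF k m) p : Dom k m →ₗ[ℝ] Cod k m) ∧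
    Module.finrank ℝ (LinearMap.range (fderiv ℝ (cuspF k m) p : Dom k m →ₗ[ℝ] Cod k m)) = 2*k+1+m := by
  have hD : fderiv ℝ (cuspF k m) p = Cusp.lin k m (pz p) :=
    (Cusp.hasStrictFDerivAt_cuspF hp).hasFDerivAt.fderiv
  have hind := Cusp.linearIndependent_famUVW (k := k) (m := m) (pz p)
  have hspan := hind.span_eq_range_of_ker_ne_bot _
    (fun q => ⟨_, Cusp.lin_single_sourceIx _ q⟩) (Cusp.ker_lin_ne_bot _)
    (by simp only [Fintype.card_sum, Fintype.card_fin, Fintype.card_unit, finrank_euclideanSpace]; ring)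
  refine ⟨hind, hD ▸ hspan, ?_⟩
  rw [hD, ← hspan, finrank_span_eq_card hind]
  simp only [Fintype.card_sum, Fintype.card_fin]
  ring

/-- at every point `p ∈ Σ(f)` the `n-1` vectors
`u_1(z), …, u_{k+1}(z), v_1(z), …, v_k(z), w_1, …, w_m` (with `z` the `z`-coordinate of `p`)
are linearly independent and span the range of `Df_p`; in particular `Df_p` has rank
`n - 1 = 2k+1+m`. -/
theorem statement1 (k m : ℕ) (hk : 1 ≤ k) (p : Dom k m) (hp : p ∈ SingSet k m) :
    LinearIndependent ℝ (famUVW k m (pz p)) ∧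
    Submodule.span ℝ (Set.range (famUVW k m (pz p)))
      = LinearMap.range (fderiv ℝ (cuspF k m) p : Dom k m →ₗ[ℝ] Cod k m) ∧
    Module.finrank ℝ (LinearMap.range (fderiv ℝ (cuspF k m) p : Dom k m →ₗ[ℝ] Cod k m)) = 2*k+1+m :=
  statement1_general k m p hp
end
end

section
/- For every p = (x, y, z, s) ∈ ℝ^n, the second partial derivative ∂²f/∂z²(p) equals Σ_{i=1}^{k} 2x_{2i}·e_{Y_i} + 6z·e_Z, and for every p ∈ Σ(f) the orthogonal projection of this vector onto the orthogonal complement of the range of Df_p equals σ(p). -/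
noncomputable section

open scoped RealInnerProductSpace

/-- The section `σ : ℝⁿ → ℝ^{n+k}` given coordinatewise (1-based, `1 ≤ i ≤ k`) by
`σ_{X_{2i−1}} = −2z x_{2i}/(1+z²+z⁴)`, `σ_{X_{2i}} = −2z² x_{2i}/(1+z²+z⁴)`,
`σ_{X_{2k+1}} = −6z²/(1+z²)`, `σ_{Y_i} = 2x_{2i}/(1+z²+z⁴)`, `σ_Z = 6z/(1+z²)`, `σ_{S_j} = 0`. -/
def sigmaF (k m : ℕ) (p : Dom k m) : Cod k m :=
  (EuclideanSpace.equiv (CodIx k m) ℝ).symm fun q =>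
    match q with
    | Sum.inl j =>
        if h : j.1 < 2*k then
          if h2 : j.1 % 2 = 0 then
            -- the coordinate `X_{2i-1}` (1-based) with `2i-1 = j.1+1`, so `x_{2i} = x`-coord `j.1+1`
            -2 * pz p * px p ⟨j.1+1, by omega⟩ / (1 + (pz p)^2 + (pz p)^4)
          else
            -- the coordinate `X_{2i}` (1-based) with `2i = j.1+1`, so `x_{2i} = x`-coord `j.1`
            -2 * (pz p)^2 * px p ⟨j.1, h⟩ / (1 + (pz p)^2 + (pz p)^4)
        else
          -- the coordinate `X_{2k+1}`
          -6 * (pz p)^2 / (1 + (pz p)^2)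
    | Sum.inr (Sum.inl i) => 2 * px p (xe i) / (1 + (pz p)^2 + (pz p)^4)
    | Sum.inr (Sum.inr (Sum.inl _)) => 6 * pz p / (1 + (pz p)^2)
    | Sum.inr (Sum.inr (Sum.inr _)) => 0

/-- The second partial derivative `∂²f/∂z²` of a map at `p`: the derivative in the
direction `e_z` of the map `q ↦ Df_q(e_z)`. -/
def d2z (k m : ℕ) (f : Dom k m → Cod k m) (p : Dom k m) : Cod k m :=
  fderiv ℝ (fun q => fderiv ℝ f q (ez k m)) p (ez k m)

/-!
On `Σ(f)` the `z`-column of `Df_p` vanishes, and a direct computation shows that `σ(p)` is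
orthogonal to the remaining columns, so `σ(p) ⊥ range Df_p`. On the other hand
`∂²f/∂z²(p) - σ(p) ∈ range Df_p`: the `X`-coordinates of `Df_p u` are just `(u_x, u_y)`, and
`∂²f/∂z²(p)` has none, so a preimage is read off from the `X`-coordinates of `-σ(p)`. These two
facts characterise `σ(p)` as the orthogonal projection of `∂²f/∂z²(p)` onto `(range Df_p)ᗮ`.
-/

namespace CuspNormalForm

open Finset

variable {k m : ℕ}

theorem sum_fin_two_mul {M : Type*} [AddCommMonoid M] (f : Fin (2 * k) → M) :
    ∑ j, f j = ∑ i : Fin k, (f (xo i) + f (xe i)) := by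
  rw [← (finProdFinEquiv.trans (finCongr (Nat.mul_comm k 2))).sum_comp, Fintype.sum_prod_type]
  refine sum_congr rfl fun i _ => ?_
  rw [Fin.sum_univ_two]
  congr 2 <;> ext <;> simp [xo, xe]; ring

def jacRow (p : Dom k m) : CodIx k m → StrongDual ℝ (Dom k m)
  | Sum.inl j => if h : j.1 < 2 * k then EuclideanSpace.proj (Sum.inl ⟨j.1, h⟩)
      else EuclideanSpace.proj (Sum.inr (Sum.inl ()))
  | Sum.inr (Sum.inl i) => pz p • EuclideanSpace.proj (Sum.inl (xo i))
      + (pz p) ^ 2 • EuclideanSpace.proj (Sum.inl (xe i))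
      + (px p (xo i) + 2 * pz p * px p (xe i)) •
          EuclideanSpace.proj (Sum.inr (Sum.inr (Sum.inl ())))
  | Sum.inr (Sum.inr (Sum.inl _)) => pz p • EuclideanSpace.proj (Sum.inr (Sum.inl ()))
      + (py p + 3 * (pz p) ^ 2) • EuclideanSpace.proj (Sum.inr (Sum.inr (Sum.inl ())))
  | Sum.inr (Sum.inr (Sum.inr j)) => EuclideanSpace.proj (Sum.inr (Sum.inr (Sum.inr j)))

def jac (p : Dom k m) : Dom k m →L[ℝ] Cod k m :=
  (EuclideanSpace.equiv (CodIx k m) ℝ).symm.toContinuousLinearMap.comp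
    (ContinuousLinearMap.pi (jacRow p))

variable (p : Dom k m)

section Coordinates

variable (u : Dom k m)

@[simp] theorem jac_apply_X_castSucc (j : Fin (2 * k)) :
    jac p u (Sum.inl j.castSucc) = px u j := by
  simp [jac, jacRow, px]

@[simp] theorem jac_apply_X_last : jac p u (Sum.inl (Fin.last _)) = py u := by
  simp [jac, jacRow, py]

@[simp] theorem jac_apply_Y (i : Fin k) :
    jac p u (Sum.inr (Sum.inl i)) = pz p * px u (xo i) + (pz p) ^ 2 * px u (xe i)
      + (px p (xo i) + 2 * pz p * px p (xe i)) * pz u := by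
  simp [jac, jacRow, px, pz]

@[simp] theorem jac_apply_Z (t : Unit) :
    jac p u (Sum.inr (Sum.inr (Sum.inl t))) = pz p * py u + (py p + 3 * (pz p) ^ 2) * pz u := by
  simp [jac, jacRow, py, pz]

@[simp] theorem jac_apply_S (j : Fin m) : jac p u (Sum.inr (Sum.inr (Sum.inr j))) = ps u j := by
  simp [jac, jacRow, ps]

end Coordinates

theorem hasFDerivAt_px (j : Fin (2 * k)) :
    HasFDerivAt (px · j) (EuclideanSpace.proj (𝕜 := ℝ) (Sum.inl j)) p :=
  PiLp.hasFDerivAt_apply 2 p _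

theorem hasFDerivAt_py : HasFDerivAt py (EuclideanSpace.proj (𝕜 := ℝ) (Sum.inr (Sum.inl ()))) p :=
  PiLp.hasFDerivAt_apply 2 p _

theorem hasFDerivAt_pz :
    HasFDerivAt pz (EuclideanSpace.proj (𝕜 := ℝ) (Sum.inr (Sum.inr (Sum.inl ())))) p :=
  PiLp.hasFDerivAt_apply 2 p _

theorem hasFDerivAt_cuspF : HasFDerivAt (cuspF k m) (jac p) p := by
  have hx := hasFDerivAt_px p
  have hy := hasFDerivAt_py p
  have hz := hasFDerivAt_pz p
  have hcoord : HasFDerivAt (fun q => EuclideanSpace.equiv (CodIx k m) ℝ (cuspF k m q))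
      (ContinuousLinearMap.pi (jacRow p)) p := by
    rw [hasFDerivAt_pi]
    rintro (j | i | _ | j)
    · by_cases h : j.1 < 2 * k
      · simpa [cuspF, jacRow, h] using hx ⟨j.1, h⟩
      · simpa [cuspF, jacRow, h] using hy
    · convert (hz.mul (hx (xo i))).add ((hz.pow 2).mul (hx (xe i))) using 1
      · ext u; rfl
      · ext u; simp [jacRow]; ring
    · convert (hz.mul hy).add (hz.pow 3) using 1
      · ext u; rfl
      · ext u; simp [jacRow]; ring
    · exact PiLp.hasFDerivAt_apply 2 p _
  exact (EuclideanSpace.equiv (CodIx k m) ℝ).symm.toContinuousLinearMap.hasFDerivAt.comp p hcoord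

theorem fderiv_cuspF : fderiv ℝ (cuspF k m) p = jac p :=
  (hasFDerivAt_cuspF p).fderiv

theorem jac_ez : jac p (ez k m) = ∑ i, (px p (xo i) + 2 * pz p * px p (xe i)) • eY k m i
    + (py p + 3 * pz p ^ 2) • eZ k m := by
  ext c
  rcases c with (j | i | _ | j)
  · induction j using Fin.lastCases <;> simp [ez, eY, eZ, px, py]
  · simp [ez, eY, eZ, px, pz, Pi.single_apply]
  · simp [ez, eY, eZ, py, pz]
  · simp [ez, eY, eZ, ps]

theorem d2z_cuspF :
    d2z k m (cuspF k m) p = ∑ i, (2 * px p (xe i)) • eY k m i + (6 * pz p) • eZ k m := by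
  have hx := hasFDerivAt_px p
  have hy := hasFDerivAt_py p
  have hz := hasFDerivAt_pz p
  have h := (HasFDerivAt.fun_sum (u := univ) fun i _ =>
    ((hx (xo i)).fun_add ((hz.const_mul 2).fun_mul (hx (xe i)))).smul_const (eY k m i)).fun_add
    ((hy.fun_add ((hz.pow 2).const_mul 3)).smul_const (eZ k m))
  simp only [d2z, fderiv_cuspF, jac_ez]
  rw [h.fderiv]
  simp [ez, mul_comm (px p _), ← mul_assoc]
  norm_num

@[simp] theorem sigmaF_apply_xo (i : Fin k) :
    sigmaF k m p (Sum.inl (xo i).castSucc) =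
      -2 * pz p * px p (xe i) / (1 + pz p ^ 2 + pz p ^ 4) := by
  simp [sigmaF, xo, xe]

@[simp] theorem sigmaF_apply_xe (i : Fin k) :
    sigmaF k m p (Sum.inl (xe i).castSucc) =
      -2 * pz p ^ 2 * px p (xe i) / (1 + pz p ^ 2 + pz p ^ 4) := by
  have h : 2 * i.1 + 1 < 2 * k := (xe i).isLt
  simp [sigmaF, xe, h]

@[simp] theorem sigmaF_apply_last :
    sigmaF k m p (Sum.inl (Fin.last _)) = -6 * pz p ^ 2 / (1 + pz p ^ 2) := by
  simp [sigmaF]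

@[simp] theorem sigmaF_apply_Y (i : Fin k) :
    sigmaF k m p (Sum.inr (Sum.inl i)) = 2 * px p (xe i) / (1 + pz p ^ 2 + pz p ^ 4) := rfl

@[simp] theorem sigmaF_apply_Z (t : Unit) :
    sigmaF k m p (Sum.inr (Sum.inr (Sum.inl t))) = 6 * pz p / (1 + pz p ^ 2) := rfl

@[simp] theorem sigmaF_apply_S (j : Fin m) : sigmaF k m p (Sum.inr (Sum.inr (Sum.inr j))) = 0 :=
  rfl

theorem inner_jac_sigmaF {p : Dom k m} (hp : p ∈ SingSet k m) (u : Dom k m) :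
    ⟪jac p u, sigmaF k m p⟫ = 0 := by
  obtain ⟨hx, hy⟩ := hp
  simp only [PiLp.inner_apply, RCLike.inner_apply, conj_trivial, Fintype.sum_sum_type,
    Fin.sum_univ_castSucc, sum_fin_two_mul, jac_apply_X_castSucc, jac_apply_X_last, jac_apply_Y,
    jac_apply_Z, jac_apply_S, Fintype.sum_unique, sigmaF_apply_xo, sigmaF_apply_xe,
    sigmaF_apply_last, sigmaF_apply_Y, sigmaF_apply_Z, sigmaF_apply_S, hx, hy, zero_mul, add_zero,
    sum_const_zero]
  rw [add_add_add_comm, ← sum_add_distrib, sum_eq_zero fun i _ => by ring]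
  ring

def jacPreimage : Dom k m :=
  WithLp.toLp 2 fun
    | Sum.inl j => -sigmaF k m p (Sum.inl j.castSucc)
    | Sum.inr (Sum.inl _) => -sigmaF k m p (Sum.inl (Fin.last _))
    | Sum.inr (Sum.inr _) => 0

theorem jac_jacPreimage : jac p (jacPreimage p) =
    ∑ i, (2 * px p (xe i)) • eY k m i + (6 * pz p) • eZ k m - sigmaF k m p := by
  have hD : 1 + pz p ^ 2 + pz p ^ 4 ≠ 0 := by positivity
  have hE : 1 + pz p ^ 2 ≠ 0 := by positivity
  ext c
  rcases c with (j | i | _ | j)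
  · induction j using Fin.lastCases <;> simp [jacPreimage, px, py, eY, eZ]
  · simp [jacPreimage, px, pz, eY, eZ, Pi.single_apply]
    field_simp
    ring
  · simp [jacPreimage, py, pz, eY, eZ]
    field_simp
    ring
  · simp [jacPreimage, ps, eY, eZ]

end CuspNormalForm

theorem statement4_general (k m : ℕ) :
    (∀ p : Dom k m,
      d2z k m (cuspF k m) p = (∑ i : Fin k, (2 * px p (xe i)) • eY k m i) + (6 * pz p) • eZ k m) ∧
    (∀ p ∈ SingSet k m,
      (Submodule.orthogonalProjectionOnto (LinearMap.range (fderiv ℝ (cuspF k m) p : Dom k m →ₗ[ℝ] Cod k m))ᗮ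
          (d2z k m (cuspF k m) p) : Cod k m) = sigmaF k m p) := by
  refine ⟨CuspNormalForm.d2z_cuspF, fun p hp => ?_⟩
  rw [CuspNormalForm.fderiv_cuspF, Submodule.coe_orthogonalProjectionOnto_apply]
  apply Submodule.eq_starProjection_of_mem_orthogonal
  · rw [Submodule.mem_orthogonal]
    rintro _ ⟨u, rfl⟩
    exact CuspNormalForm.inner_jac_sigmaF hp u
  · rw [Submodule.orthogonal_orthogonal, CuspNormalForm.d2z_cuspF]
    exact ⟨CuspNormalForm.jacPreimage p, CuspNormalForm.jac_jacPreimage p⟩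

/-- `∂²f/∂z²(p) = Σᵢ 2 x_{2i} e_{Y_i} + 6z e_Z` for every `p`, and for `p ∈ Σ(f)`
the orthogonal projection of this vector onto the orthogonal complement of the range of `Df_p`
is `σ(p)`. -/
theorem statement4 (k m : ℕ) (hk : 1 ≤ k) :
    (∀ p : Dom k m,
      d2z k m (cuspF k m) p = (∑ i : Fin k, (2 * px p (xe i)) • eY k m i) + (6 * pz p) • eZ k m) ∧
    (∀ p ∈ SingSet k m,
      (Submodule.orthogonalProjectionOnto (LinearMap.range (fderiv ℝ (cuspF k m) p : Dom k m →ₗ[ℝ] Cod k m))ᗮ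
          (d2z k m (cuspF k m) p) : Cod k m) = sigmaF k m p) :=
  statement4_general k m
end
end
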